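/- If H is a subdivision of a graph G, then ecrw(G) ≤ 2·ecrw(H). -/

import Mathlib

/-!
Pull a decomposition of `H` back to `G` along the inclusion of the original vertices. Bags only
shrink. An edge `u v` of `G` that is subdivided into `u, w, v` and whose ends are separated by a
node `t` either yields a crossing of `t` in `H` or has `w` in the bag at `t`; so every crossing
gained at `t` is paid for by a subdivision vertex of that bag, and the crossing number of the
pullback is at most `ecrw H` plus the thickness, i.e. at most `2 ecrw H`.
-/

open SimpleGraph

universe u

/-- A tree-cut decomposition of a graph `G`: a finite tree `T` together with
pairwise disjoint (possibly empty) bags covering the vertex set of `G`. -/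
structure TreeCutDecomp {V : Type u} (G : SimpleGraph V) where
  β : Type
  fintypeβ : Fintype β
  T : SimpleGraph β
  isTree : T.IsTree
  bag : β → Set V
  disj : Pairwise fun s t => Disjoint (bag s) (bag t)
  covers : ∀ v : V, ∃ t, v ∈ bag t

namespace TreeCutDecomp

variable {V : Type u} {G : SimpleGraph V}

/-- The edge `e` of `G` crosses the bag at node `t`: its endpoints lie in bag-unions of
two distinct components of `T - t`. -/
def Crosses (D : TreeCutDecomp G) (t : D.β) (e : Sym2 V) : Prop :=
  e ∈ G.edgeSet ∧ ∃ (u v : V) (s₁ s₂ : D.β) (h₁ : s₁ ≠ t) (h₂ : s₂ ≠ t),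
    e = s(u, v) ∧ u ∈ D.bag s₁ ∧ v ∈ D.bag s₂ ∧
    ¬ (D.T.induce {x | x ≠ t}).Reachable ⟨s₁, h₁⟩ ⟨s₂, h₂⟩

/-- The number of edges crossing the bag at node `t`. -/
noncomputable def crossNum (D : TreeCutDecomp G) (t : D.β) : ℕ :=
  {e : Sym2 V | D.Crosses t e}.ncard

/-- The crossing number of the decomposition is at most `k`. -/
def CrossLE (D : TreeCutDecomp G) (k : ℕ) : Prop := ∀ t, D.crossNum t ≤ k

/-- The thickness (maximum bag size) of the decomposition is at most `a`. -/
def ThickLE (D : TreeCutDecomp G) (a : ℕ) : Prop := ∀ t, (D.bag t).ncard ≤ a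

end TreeCutDecomp

/-- The `α`-edge-crossing width: minimum crossing number over tree-cut decompositions
of thickness at most `α`. -/
noncomputable def ecrwA {V : Type u} (G : SimpleGraph V) (a : ℕ) : ℕ :=
  sInf {k | ∃ D : TreeCutDecomp G, D.ThickLE a ∧ D.CrossLE k}

/-- The edge-crossing width: minimum over tree-cut decompositions of the maximum of the
thickness and the crossing number. -/
noncomputable def ecrw {V : Type u} (G : SimpleGraph V) : ℕ :=
  sInf {k | ∃ D : TreeCutDecomp G, D.ThickLE k ∧ D.CrossLE k}

/-- The graph obtained from `G` by subdividing the edge `uv`: the edge `uv` is removed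
and a new vertex (`Fin.last n`) adjacent to exactly `u` and `v` is added. -/
def subdivideEdge {n : ℕ} (G : SimpleGraph (Fin n)) (u v : Fin n) : SimpleGraph (Fin (n + 1)) :=
  SimpleGraph.fromRel fun a b =>
    (∃ a' b' : Fin n, a = Fin.castSucc a' ∧ b = Fin.castSucc b' ∧ G.Adj a' b' ∧
      s(a', b') ≠ s(u, v))
    ∨ (a = Fin.last n ∧ (b = Fin.castSucc u ∨ b = Fin.castSucc v))

/-- `IsSubdivision G H` : `H` is obtained from `G` by repeatedly subdividing edges. -/
inductive IsSubdivision : ∀ {m n : ℕ}, SimpleGraph (Fin m) → SimpleGraph (Fin n) → Prop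
  | refl {n : ℕ} (G : SimpleGraph (Fin n)) : IsSubdivision G G
  | step {m n : ℕ} (G : SimpleGraph (Fin m)) (H : SimpleGraph (Fin n)) (u v : Fin n) :
      IsSubdivision G H → H.Adj u v → IsSubdivision G (subdivideEdge H u v)

namespace TreeCutDecomp

variable {V W : Type u} {G : SimpleGraph V}

def Separates (D : TreeCutDecomp G) (t : D.β) (a b : V) : Prop :=
  ∃ (s₁ s₂ : D.β) (h₁ : s₁ ≠ t) (h₂ : s₂ ≠ t), a ∈ D.bag s₁ ∧ b ∈ D.bag s₂ ∧
    ¬ (D.T.induce {x | x ≠ t}).Reachable ⟨s₁, h₁⟩ ⟨s₂, h₂⟩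

theorem crosses_iff {D : TreeCutDecomp G} {t : D.β} {e : Sym2 V} :
    D.Crosses t e ↔ e ∈ G.edgeSet ∧ ∃ a b, e = s(a, b) ∧ D.Separates t a b := by
  constructor
  · rintro ⟨he, a, b, s₁, s₂, h₁, h₂, rfl, ha, hb, hr⟩
    exact ⟨he, a, b, rfl, s₁, s₂, h₁, h₂, ha, hb, hr⟩
  · rintro ⟨he, a, b, rfl, s₁, s₂, h₁, h₂, ha, hb, hr⟩
    exact ⟨he, a, b, s₁, s₂, h₁, h₂, rfl, ha, hb, hr⟩

theorem Separates.symm {D : TreeCutDecomp G} {t : D.β} {a b : V} (h : D.Separates t a b) :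
    D.Separates t b a :=
  let ⟨s₁, s₂, h₁, h₂, ha, hb, hr⟩ := h
  ⟨s₂, s₁, h₂, h₁, hb, ha, fun hr' => hr hr'.symm⟩

/-- A vertex outside the bag at `t` lies in a component of `T - t` that differs from that of
`a` or from that of `b`. -/
theorem Separates.mem_bag_or {D : TreeCutDecomp G} {t : D.β} {a b : V}
    (h : D.Separates t a b) (c : V) :
    c ∈ D.bag t ∨ D.Separates t a c ∨ D.Separates t c b := by
  obtain ⟨s₁, s₂, h₁, h₂, ha, hb, hr⟩ := h
  obtain ⟨s₃, hc⟩ := D.covers c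
  by_cases h₃ : s₃ = t
  · exact Or.inl (h₃ ▸ hc)
  by_cases hr₁₃ : (D.T.induce {x | x ≠ t}).Reachable ⟨s₁, h₁⟩ ⟨s₃, h₃⟩
  · exact Or.inr (Or.inr ⟨s₃, s₂, h₃, h₂, hc, hb, fun hr₃₂ => hr (hr₁₃.trans hr₃₂)⟩)
  · exact Or.inr (Or.inl ⟨s₁, s₃, h₁, h₃, ha, hc, hr₁₃⟩)

def pull {H : SimpleGraph W} (D : TreeCutDecomp H) (G : SimpleGraph V) (f : V → W) :
    TreeCutDecomp G where
  β := D.β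
  fintypeβ := D.fintypeβ
  T := D.T
  isTree := D.isTree
  bag t := f ⁻¹' D.bag t
  disj _ _ hst := (D.disj hst).preimage f
  covers v := D.covers (f v)

theorem Crosses.map_of_pull {H : SimpleGraph W} {D : TreeCutDecomp H} {f : V → W} {t : D.β}
    {e : Sym2 V} (h : (D.pull G f).Crosses t e) (hf : e.map f ∈ H.edgeSet) :
    D.Crosses t (e.map f) := by
  obtain ⟨-, a, b, rfl, hab⟩ := crosses_iff.mp h
  exact crosses_iff.mpr ⟨hf, f a, f b, Sym2.map_mk f a b, hab⟩

theorem ncard_bag_pull_le [Finite W] {H : SimpleGraph W} (D : TreeCutDecomp H) {f : V → W}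
    (hf : f.Injective) (t : D.β) : ((D.pull G f).bag t).ncard ≤ (D.bag t).ncard :=
  Set.ncard_le_ncard_of_injOn f (fun _ ha => ha) hf.injOn

def single (G : SimpleGraph V) : TreeCutDecomp G where
  β := Unit
  fintypeβ := inferInstance
  T := ⊥
  isTree := ⟨⟨fun _ _ => Reachable.refl _⟩, isAcyclic_bot⟩
  bag _ := Set.univ
  disj s t hst := absurd (Subsingleton.elim s t) hst
  covers v := ⟨(), Set.mem_univ v⟩

theorem crossNum_single (G : SimpleGraph V) (t : (single G).β) : (single G).crossNum t = 0 := by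
  have hempty : {e | (single G).Crosses t e} = ∅ :=
    Set.eq_empty_of_forall_notMem fun _ ⟨_, _, _, s₁, _, h₁, _⟩ =>
      h₁ (Subsingleton.elim (α := Unit) s₁ t)
  rw [crossNum, hempty, Set.ncard_empty]

end TreeCutDecomp

open TreeCutDecomp

theorem exists_treeCutDecomp_ecrw {V : Type u} (G : SimpleGraph V) :
    ∃ D : TreeCutDecomp G, D.ThickLE (ecrw G) ∧ D.CrossLE (ecrw G) := by
  refine Nat.sInf_mem (s := {k | ∃ D : TreeCutDecomp G, D.ThickLE k ∧ D.CrossLE k})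
    ⟨Nat.card V, single G, fun t => ?_, fun t => ?_⟩
  · exact (Set.ncard_univ V).le
  · exact (crossNum_single G t).trans_le (Nat.zero_le _)

section Subdivision

theorem Fin.ncard_preimage_castSucc_add_ncard_inter_last {n : ℕ} (S : Set (Fin (n + 1))) :
    (Fin.castSucc ⁻¹' S).ncard + (S ∩ {Fin.last n}).ncard = S.ncard := by
  rw [← Set.ncard_image_of_injective _ (Fin.castSucc_injective n),
    Set.image_preimage_eq_inter_range, ← Set.ncard_inter_add_ncard_sdiff_eq_ncard S]
  congr 2
  ext i
  simp [Fin.range_castSucc, Fin.ext_iff, Fin.val_last]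
  omega

variable {n : ℕ} {H : SimpleGraph (Fin n)} {u v : Fin n}

theorem map_castSucc_mem_edgeSet_subdivideEdge {e : Sym2 (Fin n)} (he : e ∈ H.edgeSet)
    (hne : e ≠ s(u, v)) : e.map Fin.castSucc ∈ (subdivideEdge H u v).edgeSet := by
  induction e using Sym2.ind with
  | _ a b =>
    exact ⟨fun h => he.ne (Fin.castSucc_injective n h), Or.inl (Or.inl ⟨a, b, rfl, rfl, he, hne⟩)⟩

theorem subdivideEdge_adj_castSucc_last {x : Fin n} (hx : x = u ∨ x = v) :
    (subdivideEdge H u v).Adj x.castSucc (Fin.last n) :=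
  ⟨(Fin.castSucc_lt_last x).ne, Or.inr (Or.inr ⟨rfl, hx.imp (congrArg _) (congrArg _)⟩)⟩

theorem last_notMem_map_castSucc (e : Sym2 (Fin n)) : Fin.last n ∉ e.map Fin.castSucc := by
  induction e using Sym2.ind with
  | _ a b =>
    simp only [Sym2.map_mk, Sym2.mem_iff, not_or]
    exact ⟨(Fin.castSucc_lt_last a).ne', (Fin.castSucc_lt_last b).ne'⟩

/-- In `subdivideEdge H u v` the edge `u v` becomes the path `u, last n, v`; if its ends are
separated by `t`, this path meets the bag at `t` or one of its edges crosses `t`. -/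
theorem last_mem_bag_or_exists_crosses (D : TreeCutDecomp (subdivideEdge H u v)) {t : D.β}
    (huv : (D.pull H Fin.castSucc).Crosses t s(u, v)) :
    Fin.last n ∈ D.bag t ∨ ∃ e, D.Crosses t e ∧ Fin.last n ∈ e := by
  obtain ⟨-, a, b, hab, hsep⟩ := crosses_iff.mp huv
  replace hsep : D.Separates t u.castSucc v.castSucc := by
    rcases Sym2.eq_iff.mp hab with ⟨rfl, rfl⟩ | ⟨rfl, rfl⟩
    exacts [hsep, hsep.symm]
  rcases hsep.mem_bag_or (Fin.last n) with hlast | hsep' | hsep'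
  · exact Or.inl hlast
  · exact Or.inr ⟨s(u.castSucc, Fin.last n),
      crosses_iff.mpr ⟨subdivideEdge_adj_castSucc_last (Or.inl rfl), _, _, rfl, hsep'⟩,
      Sym2.mem_mk_right _ _⟩
  · exact Or.inr ⟨s(v.castSucc, Fin.last n),
      crosses_iff.mpr ⟨subdivideEdge_adj_castSucc_last (Or.inr rfl), _, _, rfl, hsep'.symm⟩,
      Sym2.mem_mk_right _ _⟩

theorem crossNum_pull_castSucc_le (D : TreeCutDecomp (subdivideEdge H u v)) (t : D.β) :
    (D.pull H Fin.castSucc).crossNum t ≤ D.crossNum t + (D.bag t ∩ {Fin.last n}).ncard := by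
  set S := {e | (D.pull H Fin.castSucc).Crosses t e}
  set S' := {e | D.Crosses t e}
  set A := {e ∈ S' | Fin.last n ∈ e}
  change S.ncard ≤ S'.ncard + _
  have hold : (S \ {s(u, v)}).ncard ≤ (S' \ A).ncard :=
    Set.ncard_le_ncard_of_injOn (Sym2.map Fin.castSucc)
      (fun e ⟨he, hne⟩ => ⟨he.map_of_pull (map_castSucc_mem_edgeSet_subdivideEdge he.1 hne),
        fun hA => last_notMem_map_castSucc e hA.2⟩)
      (Sym2.map.injective (Fin.castSucc_injective n)).injOn
  have hA : S' \ A ⊆ S' := Set.sdiff_subset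
  by_cases huv : s(u, v) ∈ S
  · have hS := Set.ncard_sdiff_singleton_add_one huv
    rcases last_mem_bag_or_exists_crosses D huv with hlast | ⟨e, he, hlast⟩
    · rw [Set.inter_singleton_of_mem hlast, Set.ncard_singleton]
      have := Set.ncard_le_ncard hA
      omega
    · have := Set.ncard_lt_ncard
        ((Set.ssubset_iff_of_subset hA).mpr ⟨e, he, fun h => h.2 ⟨he, hlast⟩⟩)
      omega
  · rw [Set.sdiff_singleton_eq_self huv] at hold
    exact hold.trans ((Set.ncard_le_ncard hA).trans (Nat.le_add_right _ _))

end Subdivision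

theorem IsSubdivision.exists_embedding_crossNum_pull_le {m n : ℕ} {G : SimpleGraph (Fin m)}
    {H : SimpleGraph (Fin n)} (h : IsSubdivision G H) :
    ∃ f : Fin m ↪ Fin n, ∀ (D : TreeCutDecomp H) (t : D.β),
      (D.pull G f).crossNum t + ((D.pull G f).bag t).ncard ≤ D.crossNum t + (D.bag t).ncard := by
  induction h with
  | refl G => exact ⟨.refl _, fun _ _ => le_rfl⟩
  | step G H u v _ _ ih =>
    obtain ⟨f, hf⟩ := ih
    refine ⟨⟨Fin.castSucc ∘ f, (Fin.castSucc_injective _).comp f.injective⟩, fun D t => ?_⟩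
    have hstep := crossNum_pull_castSucc_le D t
    have hbag : ((D.pull H Fin.castSucc).bag t).ncard + (D.bag t ∩ {Fin.last _}).ncard =
        (D.bag t).ncard :=
      Fin.ncard_preimage_castSucc_add_ncard_inter_last (D.bag t)
    exact (hf (D.pull H Fin.castSucc) t).trans (by omega)

/-- If `H` is a subdivision of `G`, then `ecrw(G) ≤ 2·ecrw(H)`. -/
theorem stmt_5 {m n : ℕ} (G : SimpleGraph (Fin m)) (H : SimpleGraph (Fin n))
    (h : IsSubdivision G H) : ecrw G ≤ 2 * ecrw H := by
  obtain ⟨f, hf⟩ := h.exists_embedding_crossNum_pull_le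
  obtain ⟨D, hthick, hcross⟩ := exists_treeCutDecomp_ecrw H
  refine Nat.sInf_le ⟨D.pull G f, fun t => ?_, fun t => ?_⟩
  · exact (D.ncard_bag_pull_le f.injective t).trans ((hthick t).trans (by omega))
  · have := hf D t
    have := hthick t
    have := hcross t
    omega
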